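/- arXiv:1305.1685 — 2 statements merged into one kernel-verified Lean document; each statement's English description precedes it below -/
import Mathlib

section
/- (Erdős–Rényi Borel–Cantelli lemma.) Let A_1, A_2, … be events in a probability space (Ω, ℱ, ℙ) satisfying ∑_{n=1}^∞ ℙ(A_n) = ∞. Then ℙ(limsup_{n→∞} A_n) ≥ limsup_{N→∞} (∑_{n=1}^N ℙ(A_n))² / ( 2 ∑_{1 ≤ m < n ≤ N} ℙ(A_m ∩ A_n) ). -/
/-!
Write `S_N = ∑_{n<N} P(A_n)` and `D_N = 2 ∑_{m<n<N} P(A_m ∩ A_n)`, so that `S_N + D_N` is the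
second moment of the count `∑_{n<N} 1_{A_n}`. Cauchy–Schwarz for a count supported on
`U_k = ⋃_{n≥k} A_n` gives `(S_N - S_k)² ≤ (S_N + D_N) P(U_k)`, and for `k = 0` it gives
`S_N² ≤ S_N + D_N`. Since `S_N → ∞`, the latter forces `S_N = o(D_N)`, while `S_N - S_k ~ S_N`;
hence `limsup S_N² / D_N ≤ P(U_k)` for every `k`, and `P(U_k)` decreases to `P(limsup A_n)`.
-/

open MeasureTheory Filter

open scoped ENNReal Topology

namespace Finset

theorem sum_range_sum_range_eq_sum_diag_add_two_nsmul {M : Type*} [AddCommMonoid M]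
    {g : ℕ → ℕ → M} (hg : ∀ m n, g m n = g n m) (N : ℕ) :
    ∑ m ∈ range N, ∑ n ∈ range N, g m n =
      ∑ m ∈ range N, g m m + 2 • ∑ m ∈ range N, ∑ n ∈ Ioo m N, g m n := by
  have hrow : ∀ m ∈ range N, ∑ n ∈ range N, g m n =
      ∑ n ∈ range m, g m n + g m m + ∑ n ∈ Ioo m N, g m n := by
    intro m hm
    rw [← sum_range_succ, ← Ico_add_one_left_eq_Ioo,
      sum_range_add_sum_Ico _ (show m + 1 ≤ N from mem_range.1 hm)]
  have hlower : ∑ m ∈ range N, ∑ n ∈ range m, g m n = ∑ m ∈ range N, ∑ n ∈ Ioo m N, g m n := by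
    simpa only [range_eq_Ico, Ico_add_one_left_eq_Ioo, hg] using (sum_Ico_Ico_comm' 0 N g).symm
  rw [sum_congr rfl hrow, sum_add_distrib, sum_add_distrib, hlower, two_nsmul]
  abel

end Finset

section Asymptotics

variable {ι : Type*} {l : Filter ι} {S T D : ι → ℝ≥0∞} {c t : ℝ≥0∞}

theorem eventually_le_mul_of_le_add (hS : Tendsto S l (𝓝 ∞)) (hc : c ≠ ∞) (ht : 1 < t)
    (ht_top : t ≠ ∞) (hST : ∀ᶠ i in l, S i ≤ c + T i) : ∀ᶠ i in l, S i ≤ t * T i := by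
  have ht₀ : t - 1 ≠ 0 := (tsub_pos_of_lt ht).ne'
  have ht₁ : t - 1 ≠ ∞ := ENNReal.sub_ne_top ht_top
  have hlarge : c + c / (t - 1) < ∞ := ENNReal.add_lt_top.2 ⟨hc.lt_top, ENNReal.div_lt_top hc ht₀⟩
  filter_upwards [hS.eventually_const_lt hlarge, hST] with i hlt hle
  have hcT : c / (t - 1) ≤ T i := ENNReal.le_of_add_le_add_left hc (hlt.le.trans hle)
  calc S i ≤ c + T i := hle
    _ ≤ T i * (t - 1) + T i := by gcongr; exact (ENNReal.div_le_iff ht₀ ht₁).1 hcT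
    _ = t * T i := by rw [← mul_add_one, tsub_add_cancel_of_le ht.le, mul_comm]

theorem eventually_add_le_mul_of_sq_le_add (hS : Tendsto S l (𝓝 ∞))
    (hS_top : ∀ᶠ i in l, S i ≠ ∞) (hSD : ∀ᶠ i in l, S i ^ 2 ≤ S i + D i) (ht : 1 < t)
    (ht_top : t ≠ ∞) : ∀ᶠ i in l, S i + D i ≤ t * D i := by
  have ht₀ : t - 1 ≠ 0 := (tsub_pos_of_lt ht).ne'
  have ht₁ : t - 1 ≠ ∞ := ENNReal.sub_ne_top ht_top
  have hlarge : 1 + (t - 1)⁻¹ < ∞ :=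
    ENNReal.add_lt_top.2 ⟨ENNReal.one_lt_top, ENNReal.inv_lt_top.2 (pos_iff_ne_zero.2 ht₀)⟩
  filter_upwards [hS.eventually_const_lt hlarge, hS_top, hSD] with i hlt hfin hsq
  have hSD' : S i * (t - 1)⁻¹ ≤ D i := by
    refine ENNReal.le_of_add_le_add_left hfin ?_
    calc S i + S i * (t - 1)⁻¹ = S i * (1 + (t - 1)⁻¹) := by rw [mul_add, mul_one]
      _ ≤ S i ^ 2 := by rw [sq]; gcongr
      _ ≤ S i + D i := hsq
  calc S i + D i ≤ D i * (t - 1) + D i := by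
        gcongr
        rwa [← ENNReal.div_le_iff ht₀ ht₁, div_eq_mul_inv]
    _ = t * D i := by rw [← mul_add_one, tsub_add_cancel_of_le ht.le, mul_comm]

theorem limsup_sq_div_le (hS : Tendsto S l (𝓝 ∞)) (hS_top : ∀ᶠ i in l, S i ≠ ∞)
    (hSD : ∀ᶠ i in l, S i ^ 2 ≤ S i + D i) (hc : c ≠ ∞) (hST : ∀ᶠ i in l, S i ≤ c + T i)
    {p : ℝ≥0∞} (hT : ∀ᶠ i in l, T i ^ 2 ≤ (S i + D i) * p) :
    limsup (fun i => S i ^ 2 / D i) l ≤ p := by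
  have hbound : ∀ t, 1 < t → t < ∞ → limsup (fun i => S i ^ 2 / D i) l ≤ t ^ 3 * p := by
    intro t ht ht_top
    refine limsup_le_of_le (by isBoundedDefault) ?_
    filter_upwards [eventually_le_mul_of_le_add hS hc ht ht_top.ne hST,
      eventually_add_le_mul_of_sq_le_add hS hS_top hSD ht ht_top.ne, hT] with i hST hSD hT
    refine ENNReal.div_le_of_le_mul ?_
    calc S i ^ 2 ≤ t ^ 2 * T i ^ 2 := by rw [← mul_pow]; gcongr
      _ ≤ t ^ 2 * ((S i + D i) * p) := by gcongr
      _ ≤ t ^ 2 * (t * D i * p) := by gcongr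
      _ = t ^ 3 * p * D i := by ring
  have hlim : Tendsto (fun t => t ^ 3 * p) (𝓝[>] 1) (𝓝 p) := by
    simpa using ENNReal.Tendsto.mul_const
      (((ENNReal.continuous_pow 3).tendsto 1).mono_left nhdsWithin_le_nhds) (Or.inl (by simp))
  refine ge_of_tendsto hlim ?_
  filter_upwards [self_mem_nhdsWithin, nhdsWithin_le_nhds (Iio_mem_nhds ENNReal.one_lt_top)]
    with t ht ht_top using hbound t ht ht_top

end Asymptotics

section SecondMoment

variable {Ω ι : Type*} [MeasurableSpace Ω] {A : ι → Set Ω}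

theorem sq_lintegral_le_lintegral_sq_mul_measure_univ (μ : Measure Ω) {f : Ω → ℝ≥0∞}
    (hf : AEMeasurable f μ) : (∫⁻ x, f x ∂μ) ^ 2 ≤ (∫⁻ x, f x ^ 2 ∂μ) * μ Set.univ := by
  have h := ENNReal.lintegral_mul_le_Lp_mul_Lq μ Real.HolderConjugate.two_two hf
    (aemeasurable_const (b := 1))
  simp only [Pi.mul_apply, mul_one, lintegral_const, ENNReal.rpow_two, one_pow, one_mul] at h
  calc (∫⁻ x, f x ∂μ) ^ 2
      ≤ ((∫⁻ x, f x ^ 2 ∂μ) ^ (1 / 2 : ℝ) * μ Set.univ ^ (1 / 2 : ℝ)) ^ 2 := by gcongr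
    _ = (∫⁻ x, f x ^ 2 ∂μ) * μ Set.univ := by
        rw [mul_pow, ← ENNReal.rpow_two, ← ENNReal.rpow_two, ← ENNReal.rpow_mul,
          ← ENNReal.rpow_mul]
        norm_num

theorem lintegral_sum_indicator_one (μ : Measure Ω) (hA : ∀ n, MeasurableSet (A n))
    (s : Finset ι) : ∫⁻ x, ∑ n ∈ s, (A n).indicator 1 x ∂μ = ∑ n ∈ s, μ (A n) := by
  rw [lintegral_finsetSum s fun n _ => measurable_one.indicator (hA n)]
  exact Finset.sum_congr rfl fun n _ => lintegral_indicator_one (hA n)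

theorem lintegral_sq_sum_indicator_one (μ : Measure Ω) (hA : ∀ n, MeasurableSet (A n))
    (s : Finset ι) :
    ∫⁻ x, (∑ n ∈ s, (A n).indicator 1 x) ^ 2 ∂μ = ∑ m ∈ s, ∑ n ∈ s, μ (A m ∩ A n) := by
  have hsq : ∀ x, (∑ n ∈ s, (A n).indicator 1 x) ^ 2 =
      ∑ m ∈ s, ∑ n ∈ s, (A m ∩ A n).indicator (1 : Ω → ℝ≥0∞) x := fun x => by
    simp only [sq, Finset.sum_mul_sum, Set.inter_indicator_one, Pi.mul_apply]
  rw [lintegral_congr hsq, lintegral_finsetSum s fun m _ => Finset.measurable_sum s fun n _ =>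
    measurable_one.indicator ((hA m).inter (hA n))]
  exact Finset.sum_congr rfl fun m _ =>
    lintegral_sum_indicator_one μ (fun n => (hA m).inter (hA n)) s

theorem sq_sum_measure_le_mul_measure_univ (μ : Measure Ω)
    (hA : ∀ n, MeasurableSet (A n)) (s : Finset ι) :
    (∑ n ∈ s, μ (A n)) ^ 2 ≤ (∑ m ∈ s, ∑ n ∈ s, μ (A m ∩ A n)) * μ Set.univ := by
  rw [← lintegral_sum_indicator_one μ hA, ← lintegral_sq_sum_indicator_one μ hA]
  exact sq_lintegral_le_lintegral_sq_mul_measure_univ μ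
    (Finset.measurable_sum s fun n _ => measurable_one.indicator (hA n)).aemeasurable

theorem sq_sum_measure_le_mul_measure_of_subset (μ : Measure Ω)
    (hA : ∀ n, MeasurableSet (A n)) {s : Finset ι} {U : Set Ω} (hU : ∀ n ∈ s, A n ⊆ U) :
    (∑ n ∈ s, μ (A n)) ^ 2 ≤ (∑ m ∈ s, ∑ n ∈ s, μ (A m ∩ A n)) * μ U := by
  have hrestrict : ∑ n ∈ s, μ.restrict U (A n) = ∑ n ∈ s, μ (A n) :=
    Finset.sum_congr rfl fun n hn => by
      rw [Measure.restrict_apply (hA n), Set.inter_eq_left.2 (hU n hn)]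
  calc (∑ n ∈ s, μ (A n)) ^ 2
      ≤ (∑ m ∈ s, ∑ n ∈ s, μ.restrict U (A m ∩ A n)) * μ.restrict U Set.univ := by
        rw [← hrestrict]; exact sq_sum_measure_le_mul_measure_univ _ hA s
    _ ≤ (∑ m ∈ s, ∑ n ∈ s, μ (A m ∩ A n)) * μ U := by
        rw [Measure.restrict_apply_univ]
        gcongr
        exact Measure.restrict_le_self

end SecondMoment

theorem measure_limsup_atTop_eq_iInf {Ω : Type*} [MeasurableSpace Ω] (μ : Measure Ω)
    [IsFiniteMeasure μ] {s : ℕ → Set Ω} (hs : ∀ n, MeasurableSet (s n)) :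
    μ (limsup s atTop) = ⨅ k, μ (⋃ n ≥ k, s n) := by
  rw [limsup_eq_iInf_iSup_of_nat]
  simp only [Set.iInf_eq_iInter, Set.iSup_eq_iUnion]
  refine Antitone.measure_iInter
    (fun k l hkl => Set.biUnion_mono (fun n hn => hkl.trans hn) fun _ _ => le_rfl)
    (fun k => (MeasurableSet.biUnion (Set.to_countable _) fun n _ => hs n).nullMeasurableSet)
    ⟨0, measure_ne_top μ _⟩

theorem sum_range_sum_range_measure_inter {Ω : Type*} [MeasurableSpace Ω] (μ : Measure Ω)
    (A : ℕ → Set Ω) (N : ℕ) :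
    ∑ m ∈ Finset.range N, ∑ n ∈ Finset.range N, μ (A m ∩ A n) =
      ∑ n ∈ Finset.range N, μ (A n) +
        2 * ∑ m ∈ Finset.range N, ∑ n ∈ Finset.Ioo m N, μ (A m ∩ A n) := by
  simpa only [Set.inter_self, nsmul_eq_mul, Nat.cast_ofNat] using
    Finset.sum_range_sum_range_eq_sum_diag_add_two_nsmul (g := fun m n => μ (A m ∩ A n))
      (fun m n => by rw [Set.inter_comm]) N

/-- The Erdős–Rényi version of the Borel–Cantelli lemma: if `∑ P(Aₙ) = ∞`, then
`P(limsup Aₙ) ≥ limsup_N (∑_{n<N} P(Aₙ))² / (2 ∑_{m<n<N} P(Aₘ ∩ Aₙ))`.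
All quantities are computed in `ℝ≥0∞`. -/
theorem erdos_renyi_borel_cantelli {Ω : Type*} [MeasurableSpace Ω]
    (P : Measure Ω) [IsProbabilityMeasure P] (A : ℕ → Set Ω)
    (hA : ∀ n, MeasurableSet (A n))
    (hdiv : ∑' n : ℕ, P (A n) = ⊤) :
    Filter.atTop.limsup (fun N : ℕ =>
        (∑ n ∈ Finset.range N, P (A n)) ^ 2 /
          (2 * ∑ m ∈ Finset.range N, ∑ n ∈ Finset.Ioo m N, P (A m ∩ A n))) ≤
      P (Filter.atTop.limsup A) := by
  set S : ℕ → ℝ≥0∞ := fun N => ∑ n ∈ Finset.range N, P (A n)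
  set D : ℕ → ℝ≥0∞ := fun N => 2 * ∑ m ∈ Finset.range N, ∑ n ∈ Finset.Ioo m N, P (A m ∩ A n)
  have hpairs (N : ℕ) :
      ∑ m ∈ Finset.range N, ∑ n ∈ Finset.range N, P (A m ∩ A n) = S N + D N :=
    sum_range_sum_range_measure_inter P A N
  have hS : Tendsto S atTop (𝓝 ∞) := hdiv ▸ ENNReal.tendsto_nat_tsum fun n => P (A n)
  have hS_top (N : ℕ) : S N ≠ ∞ := ENNReal.sum_ne_top.2 fun n _ => measure_ne_top P _
  have hSD (N : ℕ) : S N ^ 2 ≤ S N + D N := by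
    simpa only [hpairs, measure_univ, mul_one] using
      sq_sum_measure_le_mul_measure_of_subset P hA fun n (_ : n ∈ Finset.range N) =>
        Set.subset_univ (A n)
  rw [measure_limsup_atTop_eq_iInf P hA]
  refine le_iInf fun k => limsup_sq_div_le hS (.of_forall hS_top) (.of_forall hSD) (hS_top k)
    (T := fun N => ∑ n ∈ Finset.Ico k N, P (A n)) ?_ (.of_forall fun N => ?_)
  · filter_upwards [eventually_ge_atTop k] with N hN using (Finset.sum_range_add_sum_Ico _ hN).ge
  · have hIco : Finset.Ico k N ⊆ Finset.range N :=
      fun n hn => Finset.mem_range.2 (Finset.mem_Ico.1 hn).2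
    rw [← hpairs]
    refine (sq_sum_measure_le_mul_measure_of_subset P hA fun n hn =>
      Set.subset_biUnion_of_mem (u := A) (Finset.mem_Ico.1 hn).1).trans ?_
    gcongr
    exact (Finset.sum_le_sum fun m _ => Finset.sum_le_sum_of_subset hIco).trans
      (Finset.sum_le_sum_of_subset hIco)
end

section
/- For a non-negative function ψ : ℕ → ℝ with 0 < ψ(n) ≤ 1/2, the Lebesgue measure of E_n equals 2ψ(n)φ(n)/n, i.e. λ(E_n) = 2ψ(n)φ(n)/n. -/
open MeasureTheory

/-- The set `E_n ⊆ ℝ/ℤ`. -/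
noncomputable def approxSet (ψ : ℕ → ℝ) (n : ℕ) : Set UnitAddCircle :=
  ⋃ a ∈ {a : ℕ | 1 ≤ a ∧ a ≤ n ∧ Nat.gcd a n = 1},
    (fun x : ℝ => (x : UnitAddCircle)) ''
      Set.Ioo (((a : ℝ) - ψ n) / n) (((a : ℝ) + ψ n) / n)

lemma coe_eq_coe_iff_unit (s t : ℝ) :
    (s : UnitAddCircle) = (t : UnitAddCircle) ↔ ∃ k : ℤ, s - t = (k : ℝ) := by
  constructor
  · intro h
    have h0 : ((s - t : ℝ) : UnitAddCircle) = 0 := by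
      rw [AddCircle.coe_sub, h, sub_self]
    obtain ⟨k, hk⟩ := (AddCircle.coe_eq_zero_iff (1 : ℝ)).mp h0
    exact ⟨k, by rw [← hk, zsmul_eq_mul, mul_one]⟩
  · rintro ⟨k, hk⟩
    have h1 : s = t + k • (1 : ℝ) := by rw [zsmul_eq_mul, mul_one]; linarith
    rw [h1, AddCircle.coe_add,
      (AddCircle.coe_eq_zero_iff (1 : ℝ)).mpr ⟨k, rfl⟩, add_zero]

lemma volume_image_Ioo (x y : ℝ) (hxy : x < y) (h1 : y - x ≤ 1) :
    volume ((fun t : ℝ => (t : UnitAddCircle)) '' Set.Ioo x y) =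
      ENNReal.ofReal (y - x) := by
  have hmeas : MeasurableSet ((fun t : ℝ => (t : UnitAddCircle)) '' Set.Ioo x y) :=
    (QuotientAddGroup.isOpenMap_coe _ isOpen_Ioo).measurableSet
  rw [AddCircle.add_projection_respects_measure (1 : ℝ) x hmeas]
  have hset : QuotientAddGroup.mk ⁻¹'
      ((fun t : ℝ => (t : UnitAddCircle)) '' Set.Ioo x y) ∩ Set.Ioc x (x + 1)
      = Set.Ioo x y := by
    ext t
    constructor
    · rintro ⟨⟨s, hs, hst⟩, ht⟩
      obtain ⟨k, hk⟩ := (coe_eq_coe_iff_unit s t).mp hst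
      have hk0 : k = 0 := by
        rcases lt_trichotomy k 0 with h | h | h
        · exfalso
          have hle : (k : ℝ) ≤ -1 := by exact_mod_cast (by omega : k ≤ -1)
          linarith [hs.1, ht.2]
        · exact h
        · exfalso
          have hle : (1 : ℝ) ≤ (k : ℝ) := by exact_mod_cast (by omega : 1 ≤ k)
          linarith [hs.2, ht.1]
      rw [hk0] at hk
      simp only [Int.cast_zero] at hk
      have : s = t := by linarith
      exact this ▸ hs
    · intro ht
      exact ⟨⟨t, ht, rfl⟩, ⟨ht.1, by linarith [ht.2]⟩⟩
  rw [hset, Real.volume_Ioo]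

lemma image_disjoint (n : ℕ) (ψn : ℝ) (h0 : 0 < ψn) (h12 : ψn ≤ 1 / 2)
    {a b : ℕ} (ha : 1 ≤ a ∧ a ≤ n) (hb : 1 ≤ b ∧ b ≤ n) (hab : a ≠ b) :
    Disjoint
      ((fun x : ℝ => (x : UnitAddCircle)) ''
        Set.Ioo (((a : ℝ) - ψn) / n) (((a : ℝ) + ψn) / n))
      ((fun x : ℝ => (x : UnitAddCircle)) ''
        Set.Ioo (((b : ℝ) - ψn) / n) (((b : ℝ) + ψn) / n)) := by
  have hn1 : 1 ≤ n := le_trans ha.1 ha.2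
  have hn : (0 : ℝ) < n := by exact_mod_cast Nat.lt_of_lt_of_le Nat.zero_lt_one hn1
  rw [Set.disjoint_left]
  rintro z ⟨s, hs, rfl⟩ ⟨t, ht, hst⟩
  obtain ⟨k, hk⟩ := (coe_eq_coe_iff_unit s t).mp hst.symm
  have hs1 : (a : ℝ) - ψn < n * s := by
    have := hs.1; rw [div_lt_iff₀ hn] at this; linarith
  have hs2 : n * s < (a : ℝ) + ψn := by
    have := hs.2; rw [lt_div_iff₀ hn] at this; linarith
  have ht1 : (b : ℝ) - ψn < n * t := by
    have := ht.1; rw [div_lt_iff₀ hn] at this; linarith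
  have ht2 : n * t < (b : ℝ) + ψn := by
    have := ht.2; rw [lt_div_iff₀ hn] at this; linarith
  have hexp : (n : ℝ) * s = n * t + n * k := by
    have : s = t + (k : ℝ) := by linarith [hk]
    rw [this]; ring
  have hreal : |((a : ℝ) - b - n * k)| < 1 := by
    rw [abs_lt]; constructor <;> [linarith; linarith]
  have habs : |((a : ℤ) - (b : ℤ) - (n : ℤ) * k)| < 1 := by
    have h2 : ((a : ℝ) - b - n * k) = (((a : ℤ) - (b : ℤ) - (n : ℤ) * k : ℤ) : ℝ) := by
      push_cast; ring
    rw [h2] at hreal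
    exact_mod_cast hreal
  have hzero : (a : ℤ) - (b : ℤ) - (n : ℤ) * k = 0 := by
    rcases Int.abs_lt_one_iff.mp habs with h; exact h
  have hnk : (a : ℤ) = (b : ℤ) + (n : ℤ) * k := by omega
  rcases lt_trichotomy k 0 with h | h | h
  · have hmul : (n : ℤ) * k ≤ (n : ℤ) * (-1) := by
      apply mul_le_mul_of_nonneg_left (by omega) (by exact_mod_cast Nat.zero_le n)
    have := ha.1; have := hb.2; omega
  · exact hab (by rw [h, mul_zero, add_zero] at hnk; exact_mod_cast hnk)
  · have hmul : (n : ℤ) * 1 ≤ (n : ℤ) * k := by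
      apply mul_le_mul_of_nonneg_left (by omega) (by exact_mod_cast Nat.zero_le n)
    have := ha.2; have := hb.1; omega

lemma card_coprime_Icc (n : ℕ) (hn : 1 ≤ n) :
    ((Finset.Icc 1 n).filter (fun a => Nat.gcd a n = 1)).card = Nat.totient n := by
  rcases eq_or_lt_of_le hn with h | h
  · subst h; decide
  · rw [Nat.totient]
    congr 1
    ext a
    simp only [Finset.mem_filter, Finset.mem_Icc, Finset.mem_range, Nat.Coprime]
    constructor
    · rintro ⟨⟨h1, h2⟩, h3⟩
      have : a ≠ n := by rintro rfl; rw [Nat.gcd_self] at h3; omega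
      exact ⟨by omega, by rw [Nat.gcd_comm]; exact h3⟩
    · rintro ⟨h1, h2⟩
      have : a ≠ 0 := by rintro rfl; rw [Nat.gcd_zero_right] at h2; omega
      exact ⟨⟨by omega, by omega⟩, by rw [Nat.gcd_comm]; exact h2⟩

/-- For `0 < ψ(n) ≤ 1/2`, the measure of `E_n` is `2 ψ(n) φ(n) / n`. -/
theorem measure_approxSet (ψ : ℕ → ℝ) (n : ℕ) (hn : 1 ≤ n)
    (h0 : 0 < ψ n) (h12 : ψ n ≤ 1 / 2) :
    (volume (approxSet ψ n)).toReal = 2 * ψ n * (Nat.totient n : ℝ) / n := by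
  classical
  set F := (Finset.Icc 1 n).filter (fun a => Nat.gcd a n = 1) with hF
  have hnp : (0 : ℝ) < n := by exact_mod_cast hn
  have hn1 : (1 : ℝ) ≤ n := by exact_mod_cast hn
  have hunion : approxSet ψ n = ⋃ a ∈ F, (fun x : ℝ => (x : UnitAddCircle)) ''
      Set.Ioo (((a : ℝ) - ψ n) / n) (((a : ℝ) + ψ n) / n) := by
    unfold approxSet
    have hS : {a : ℕ | 1 ≤ a ∧ a ≤ n ∧ Nat.gcd a n = 1} = ↑F := by
      ext a
      simp [hF, Finset.mem_filter, Finset.mem_Icc, and_assoc]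
    rw [hS]
    simp
  have hdisj : (↑F : Set ℕ).PairwiseDisjoint
      (fun a : ℕ => (fun x : ℝ => (x : UnitAddCircle)) ''
        Set.Ioo (((a : ℝ) - ψ n) / n) (((a : ℝ) + ψ n) / n)) := by
    intro a haF b hbF hab
    simp only [hF, Finset.coe_filter, Set.mem_setOf_eq, Finset.mem_Icc] at haF hbF
    exact image_disjoint n (ψ n) h0 h12 haF.1 hbF.1 hab
  have hmeas : ∀ a ∈ F, MeasurableSet ((fun x : ℝ => (x : UnitAddCircle)) ''
      Set.Ioo (((a : ℝ) - ψ n) / n) (((a : ℝ) + ψ n) / n)) := by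
    intro a _
    exact (QuotientAddGroup.isOpenMap_coe _ isOpen_Ioo).measurableSet
  have hvol : ∀ a ∈ F, volume ((fun x : ℝ => (x : UnitAddCircle)) ''
      Set.Ioo (((a : ℝ) - ψ n) / n) (((a : ℝ) + ψ n) / n))
      = ENNReal.ofReal (2 * ψ n / n) := by
    intro a _
    rw [volume_image_Ioo]
    · congr 1; field_simp; ring
    · rw [div_lt_div_iff₀ hnp hnp]; nlinarith
    · have : ((a : ℝ) + ψ n) / n - ((a : ℝ) - ψ n) / n = 2 * ψ n / n := by
        field_simp; ring
      rw [this, div_le_one hnp]; linarith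
  rw [hunion, measure_biUnion_finset hdisj hmeas, Finset.sum_congr rfl hvol,
    Finset.sum_const, hF, card_coprime_Icc n hn]
  rw [nsmul_eq_mul, ENNReal.toReal_mul, ENNReal.toReal_ofReal (by positivity),
    ENNReal.toReal_natCast]
  ring
end
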